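/- arXiv:1404.0320 — 2 statements merged into one kernel-verified Lean document; each statement's English description precedes it below -/
import Mathlib

section
/- Let X be an m×n real matrix, let {p_ij} be sampling probabilities satisfying p_ij ≥ (β/2)·(X_ij²/‖X‖_F² + |X_ij|/Σ_{k,l}|X_kl|) for all i,j and some β ∈ (0,1], and for any index pair (i,j) with p_ij > 0 let M = (X_ij/p_ij)·e_i e_j^T − X. Then ‖M‖₂ ≤ (3·√(mn)/β)·‖X‖_F. -/
open scoped BigOperators

/-- Spectral norm (ℓ₂ operator norm) of a real matrix. -/
noncomputable def specNorm {a b : ℕ} (A : Matrix (Fin a) (Fin b) ℝ) : ℝ :=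
  ‖LinearMap.toContinuousLinearMap (Matrix.toEuclideanLin A)‖

/-- Frobenius norm of a real matrix. -/
noncomputable def frobNorm {a b : ℕ} (A : Matrix (Fin a) (Fin b) ℝ) : ℝ :=
  Real.sqrt (∑ i, ∑ j, (A i j) ^ 2)

/-- The sparsification operator of Algorithm 1 applied to the sample `ω`. -/
noncomputable def sampleOp {m n s : ℕ} (X : Matrix (Fin m) (Fin n) ℝ)
    (p : Fin m → Fin n → ℝ) (ω : Fin s → Fin m × Fin n) : Matrix (Fin m) (Fin n) ℝ :=
  (s : ℝ)⁻¹ • ∑ t : Fin s,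
    (X (ω t).1 (ω t).2 / p (ω t).1 (ω t).2) • Matrix.single (ω t).1 (ω t).2 (1 : ℝ)

/-- Probability, over `s` i.i.d. index samples drawn according to `p`, of the event `E`. -/
noncomputable def sampleProb {m n s : ℕ} (p : Fin m → Fin n → ℝ)
    (E : (Fin s → Fin m × Fin n) → Prop) : ℝ :=
  ∑ ω : Fin s → Fin m × Fin n,
    Set.indicator {ω | E ω} (fun ω => ∏ t, p (ω t).1 (ω t).2) ω

lemma frobNorm_nonneg {a b : ℕ} (A : Matrix (Fin a) (Fin b) ℝ) : 0 ≤ frobNorm A :=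
  Real.sqrt_nonneg _

lemma frobNorm_eq_norm {a b : ℕ} (A : Matrix (Fin a) (Fin b) ℝ) :
    frobNorm A = ‖((WithLp.equiv 2 (Fin a × Fin b → ℝ)).symm
      (fun q => A q.1 q.2) : EuclideanSpace ℝ (Fin a × Fin b))‖ := by
  rw [EuclideanSpace.norm_eq, frobNorm]
  congr 1
  rw [Fintype.sum_prod_type]
  simp [sq_abs]

lemma specNorm_le_frobNorm {a b : ℕ} (A : Matrix (Fin a) (Fin b) ℝ) :
    specNorm A ≤ frobNorm A := by
  apply ContinuousLinearMap.opNorm_le_bound _ (frobNorm_nonneg A)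
  intro x
  rw [EuclideanSpace.norm_eq, EuclideanSpace.norm_eq]
  have hx : ∀ j, ‖x j‖ ^ 2 = x j ^ 2 := fun j => sq_abs _
  have key : ∑ k, ‖(Matrix.toEuclideanLin A x) k‖ ^ 2
      ≤ (∑ k, ∑ l, A k l ^ 2) * ∑ l, ‖x l‖ ^ 2 := by
    rw [Finset.sum_mul]
    apply Finset.sum_le_sum
    intro k _
    have : (Matrix.toEuclideanLin A x) k = ∑ l, A k l * x l := by
      simp [Matrix.toEuclideanLin_apply, Matrix.mulVec, dotProduct]
    rw [this, Real.norm_eq_abs, sq_abs]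
    calc (∑ l, A k l * x l) ^ 2 ≤ (∑ l, A k l ^ 2) * ∑ l, (x l) ^ 2 :=
          Finset.sum_mul_sq_le_sq_mul_sq _ _ _
      _ = (∑ l, A k l ^ 2) * ∑ l, ‖x l‖ ^ 2 := by simp [hx]
  calc Real.sqrt (∑ k, ‖(LinearMap.toContinuousLinearMap (Matrix.toEuclideanLin A) x) k‖ ^ 2)
      ≤ Real.sqrt ((∑ k, ∑ l, A k l ^ 2) * ∑ l, ‖x l‖ ^ 2) := Real.sqrt_le_sqrt key
    _ = frobNorm A * Real.sqrt (∑ l, ‖x l‖ ^ 2) := by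
        rw [Real.sqrt_mul (by positivity), frobNorm]

lemma frobNorm_sub_le {a b : ℕ} (A B : Matrix (Fin a) (Fin b) ℝ) :
    frobNorm (A - B) ≤ frobNorm A + frobNorm B := by
  rw [frobNorm_eq_norm, frobNorm_eq_norm, frobNorm_eq_norm]
  have : ((WithLp.equiv 2 (Fin a × Fin b → ℝ)).symm (fun q => (A - B) q.1 q.2)
      : EuclideanSpace ℝ (Fin a × Fin b))
      = (WithLp.equiv 2 _).symm (fun q => A q.1 q.2) - (WithLp.equiv 2 _).symm (fun q => B q.1 q.2) := rfl
  rw [this]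
  exact norm_sub_le _ _

lemma frobNorm_smul_std {a b : ℕ} (i : Fin a) (j : Fin b) (c : ℝ) :
    frobNorm (c • Matrix.single i j (1 : ℝ)) = |c| := by
  rw [frobNorm]
  have : ∀ k l, ((c • Matrix.single i j (1 : ℝ)) k l) ^ 2
      = if k = i then (if l = j then c ^ 2 else 0) else 0 := by
    intro k l
    simp only [Matrix.smul_apply, Matrix.single, Matrix.of_apply, smul_eq_mul]
    by_cases hk : k = i <;> by_cases hl : l = j <;>
      simp [hk, hl, eq_comm (a := i), eq_comm (a := j)]
  simp only [this]
  simp [Real.sqrt_sq_eq_abs]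


/-- Lemma 1: for any index pair (i,j) with p_ij > 0, the matrix
M = (X_ij / p_ij) e_i e_jᵀ − X satisfies ‖M‖₂ ≤ (3√(mn)/β) ‖X‖_F. -/
theorem bound_Mt_spectral_norm {m n : ℕ} (X : Matrix (Fin m) (Fin n) ℝ)
    (β : ℝ) (hβ0 : 0 < β) (hβ1 : β ≤ 1)
    (p : Fin m → Fin n → ℝ) (hp0 : ∀ i j, 0 ≤ p i j) (hpsum : ∑ i, ∑ j, p i j = 1)
    (hplb : ∀ i j, p i j ≥ (β / 2) *
      ((X i j) ^ 2 / (frobNorm X) ^ 2 + |X i j| / ∑ k, ∑ l, |X k l|))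
    (i : Fin m) (j : Fin n) (hpij : 0 < p i j) :
    specNorm ((X i j / p i j) • Matrix.single i j (1 : ℝ) - X)
      ≤ (3 * Real.sqrt (m * n) / β) * frobNorm X := by
  set F := frobNorm X with hF
  set S := ∑ k, ∑ l, |X k l| with hS
  have hF0 : 0 ≤ F := frobNorm_nonneg X
  have hS0 : 0 ≤ S := by positivity
  -- step 1: spectral norm ≤ |c| + F
  have h1 : specNorm ((X i j / p i j) • Matrix.single i j (1 : ℝ) - X)
      ≤ |X i j / p i j| + F := by
    calc specNorm ((X i j / p i j) • Matrix.single i j (1 : ℝ) - X)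
        ≤ frobNorm ((X i j / p i j) • Matrix.single i j (1 : ℝ) - X) :=
          specNorm_le_frobNorm _
      _ ≤ frobNorm ((X i j / p i j) • Matrix.single i j (1 : ℝ)) + frobNorm X :=
          frobNorm_sub_le _ _
      _ = |X i j / p i j| + F := by rw [frobNorm_smul_std]
  -- step 2: |X i j| / p i j ≤ 2 S / β
  have h2 : |X i j| / p i j ≤ 2 * S / β := by
    by_cases hx : X i j = 0
    · simp only [hx, abs_zero, zero_div]
      positivity
    · have habs : 0 < |X i j| := abs_pos.mpr hx
      have hSin : |X i j| ≤ S := by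
        calc |X i j| ≤ ∑ l, |X i l| :=
              Finset.single_le_sum (f := fun l => |X i l|) (fun l _ => abs_nonneg _)
                (Finset.mem_univ j)
          _ ≤ S := Finset.single_le_sum (f := fun k => ∑ l, |X k l|)
                (fun k _ => Finset.sum_nonneg fun l _ => abs_nonneg _) (Finset.mem_univ i)
      have hSpos : 0 < S := lt_of_lt_of_le habs hSin
      have hlb : p i j ≥ (β / 2) * (|X i j| / S) := by
        refine le_trans ?_ (hplb i j)
        have h0 : 0 ≤ (X i j) ^ 2 / F ^ 2 := by positivity
        nlinarith [hβ0.le]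
      rw [div_le_div_iff₀ hpij hβ0]
      -- goal: |X i j| * β ≤ 2 * S / β * p i j
      have key : β * |X i j| ≤ 2 * S * p i j := by
        have h' : (β / 2) * (|X i j| / S) * (2 * S) ≤ p i j * (2 * S) :=
          mul_le_mul_of_nonneg_right hlb (by positivity)
        have heq : (β / 2) * (|X i j| / S) * (2 * S) = β * |X i j| := by
          field_simp
        nlinarith
      calc |X i j| * β = β * |X i j| := mul_comm _ _
        _ ≤ 2 * S * p i j := key
  -- step 3: S ≤ sqrt(mn) * F  (Cauchy–Schwarz)
  have hF2 : F ^ 2 = ∑ k, ∑ l, (X k l) ^ 2 := Real.sq_sqrt (by positivity)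
  have e1 : ∑ q : Fin m × Fin n, |X q.1 q.2| = S := by rw [hS, Fintype.sum_prod_type]
  have e2 : ∑ q : Fin m × Fin n, (X q.1 q.2) ^ 2 = F ^ 2 := by
    rw [hF2, Fintype.sum_prod_type]
  have cs : S ^ 2 ≤ (m * n : ℝ) * F ^ 2 := by
    have h := Finset.sum_mul_sq_le_sq_mul_sq Finset.univ
      (fun _ : Fin m × Fin n => (1 : ℝ)) (fun q => |X q.1 q.2|)
    simp only [one_mul, one_pow, sq_abs, Finset.sum_const, Finset.card_univ,
      Fintype.card_prod, Fintype.card_fin, nsmul_eq_mul, mul_one] at h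
    rw [e1, e2] at h
    exact_mod_cast h
  have h3 : S ≤ Real.sqrt (m * n) * F := by
    rw [← Real.sqrt_sq hS0]
    calc Real.sqrt (S ^ 2) ≤ Real.sqrt ((m * n : ℝ) * F ^ 2) := Real.sqrt_le_sqrt cs
      _ = Real.sqrt (m * n) * F := by
          rw [Real.sqrt_mul (by positivity), Real.sqrt_sq hF0]
  -- step 4: 1 ≤ sqrt(mn)
  have hm1 : (1 : ℝ) ≤ (m : ℝ) := by exact_mod_cast Nat.succ_le_of_lt i.pos
  have hn1 : (1 : ℝ) ≤ (n : ℝ) := by exact_mod_cast Nat.succ_le_of_lt j.pos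
  have hsq1 : (1 : ℝ) ≤ Real.sqrt (m * n) := by
    rw [← Real.sqrt_one]
    apply Real.sqrt_le_sqrt
    nlinarith
  have h4 : F ≤ Real.sqrt (m * n) / β * F :=
    le_mul_of_one_le_left hF0 ((one_le_div hβ0).mpr (hβ1.trans hsq1))
  have habsdiv : |X i j / p i j| = |X i j| / p i j := by
    rw [abs_div, abs_of_pos hpij]
  calc specNorm ((X i j / p i j) • Matrix.single i j (1 : ℝ) - X)
      ≤ |X i j / p i j| + F := h1
    _ = |X i j| / p i j + F := by rw [habsdiv]
    _ ≤ 2 * S / β + F := by linarith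
    _ ≤ 2 * (Real.sqrt (m * n) * F) / β + Real.sqrt (m * n) / β * F := by
        have hdd : 2 * S / β ≤ 2 * (Real.sqrt (m * n) * F) / β := by gcongr
        linarith
    _ = (3 * Real.sqrt (m * n) / β) * F := by ring
end

section
/- Let X be an m×n real matrix, let {p_ij} be sampling probabilities satisfying p_ij ≥ (β/2)·(X_ij²/‖X‖_F² + |X_ij|/Σ_{k,l}|X_kl|) for all i,j and some β ∈ (0,1], and let (I,J) be a random index pair with ℙ[(I,J)=(i,j)] = p_ij. Define the random matrix M = (X_{IJ}/p_{IJ})·e_I e_J^T − X. Then ‖E[M M^T]‖₂ ≤ (2n/β)·‖X‖_F². -/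
open scoped BigOperators Matrix

-- auxiliary: sum of matrices mulVec
lemma my_sum_mulVec {ι : Type*} (s : Finset ι) {a b : ℕ}
    (f : ι → Matrix (Fin a) (Fin b) ℝ) (v : Fin b → ℝ) :
    (∑ i ∈ s, f i) *ᵥ v = ∑ i ∈ s, (f i) *ᵥ v := by
  ext k
  simp [Matrix.mulVec, dotProduct, Matrix.sum_apply, Finset.sum_mul]
  rw [Finset.sum_comm]

lemma my_dotProduct_sum {ι : Type*} (s : Finset ι) {a : ℕ}
    (v : Fin a → ℝ) (f : ι → (Fin a → ℝ)) :
    dotProduct v (∑ i ∈ s, f i) = ∑ i ∈ s, dotProduct v (f i) := by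
  simp [dotProduct, Finset.mul_sum, Finset.sum_apply]
  rw [Finset.sum_comm]

lemma my_dotProduct_self_nonneg {a : ℕ} (v : Fin a → ℝ) :
    0 ≤ dotProduct v v :=
  Finset.sum_nonneg fun i _ => mul_self_nonneg (v i)

-- quadratic form of M * Mᵀ is nonneg
lemma my_quad_mul_transpose_nonneg {a b : ℕ} (M : Matrix (Fin a) (Fin b) ℝ) (v : Fin a → ℝ) :
    0 ≤ dotProduct v ((M * Mᵀ) *ᵥ v) := by
  rw [← Matrix.mulVec_mulVec, Matrix.dotProduct_mulVec, Matrix.mulVec_transpose]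
  exact my_dotProduct_self_nonneg _

-- operator norm bound from quadratic form, for symmetric PSD matrices
lemma specNorm_le_of_quadform {a : ℕ} (A : Matrix (Fin a) (Fin a) ℝ)
    (hsym : Aᵀ = A) (hpsd : ∀ v : Fin a → ℝ, 0 ≤ dotProduct v (A *ᵥ v))
    (C : ℝ) (hC : 0 ≤ C)
    (hq : ∀ v : Fin a → ℝ, dotProduct v (A *ᵥ v) ≤ C * dotProduct v v) :
    specNorm A ≤ C := by
  have hsymB : ∀ x y : Fin a → ℝ,
      dotProduct x (A *ᵥ y) = dotProduct y (A *ᵥ x) := by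
    intro x y
    rw [Matrix.dotProduct_mulVec, ← Matrix.mulVec_transpose, hsym, dotProduct_comm]
  have hnorm : ∀ u : Fin a → ℝ,
      ‖(WithLp.equiv 2 (Fin a → ℝ)).symm u‖ = Real.sqrt (dotProduct u u) := by
    intro u
    rw [EuclideanSpace.norm_eq]
    congr 1
    refine Finset.sum_congr rfl fun i _ => ?_
    simp [Real.norm_eq_abs, sq_abs, sq, dotProduct]
  rw [specNorm]
  apply ContinuousLinearMap.opNorm_le_bound _ hC
  intro y
  set v : Fin a → ℝ := (WithLp.equiv 2 (Fin a → ℝ)) y with hv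
  set w : Fin a → ℝ := A *ᵥ v with hw
  have happly : (LinearMap.toContinuousLinearMap (Matrix.toEuclideanLin A)) y
      = (WithLp.equiv 2 (Fin a → ℝ)).symm w := rfl
  have hy : y = (WithLp.equiv 2 (Fin a → ℝ)).symm v := rfl
  rw [happly, hy, hnorm, hnorm]
  -- Cauchy-Schwarz for the PSD form
  have hCS : (dotProduct v (A *ᵥ w))^2
      ≤ dotProduct v (A *ᵥ v) * dotProduct w (A *ᵥ w) := by
    have hd := discrim_le_zero (a := dotProduct v (A *ᵥ v))
      (b := 2 * dotProduct v (A *ᵥ w)) (c := dotProduct w (A *ᵥ w)) ?_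
    · rw [discrim] at hd; nlinarith [hd]
    · intro t
      have h0 := hpsd (t • v + w)
      have hexp : dotProduct (t • v + w) (A *ᵥ (t • v + w))
          = dotProduct v (A *ᵥ v) * (t * t)
            + 2 * dotProduct v (A *ᵥ w) * t + dotProduct w (A *ᵥ w) := by
        rw [Matrix.mulVec_add, Matrix.mulVec_smul]
        simp only [add_dotProduct, dotProduct_add, smul_dotProduct,
          dotProduct_smul, smul_eq_mul]
        rw [hsymB w v]
        ring
      rw [hexp] at h0
      linarith
  have hBw : dotProduct v (A *ᵥ w) = dotProduct w w := by
    rw [hsymB]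
  rw [hBw] at hCS
  have hs : 0 ≤ dotProduct w w := my_dotProduct_self_nonneg w
  have hr : 0 ≤ dotProduct v v := my_dotProduct_self_nonneg v
  have hkey : dotProduct w w ≤ C^2 * dotProduct v v := by
    rcases eq_or_lt_of_le hs with h | h
    · nlinarith
    · have h1 : (dotProduct w w)^2 ≤ (C * dotProduct v v) * (C * dotProduct w w) := by
        calc (dotProduct w w)^2 ≤ dotProduct v (A *ᵥ v) * dotProduct w (A *ᵥ w) := hCS
        _ ≤ (C * dotProduct v v) * (C * dotProduct w w) := by
            apply mul_le_mul (hq v) (hq w) (hpsd w) (by positivity)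
      nlinarith
  calc Real.sqrt (dotProduct w w) ≤ Real.sqrt (C^2 * dotProduct v v) :=
        Real.sqrt_le_sqrt hkey
    _ = C * Real.sqrt (dotProduct v v) := by
        rw [Real.sqrt_mul (sq_nonneg C), Real.sqrt_sq hC]

lemma my_transpose_std {a b : ℕ} (i : Fin a) (j : Fin b) (c : ℝ) :
    (Matrix.single i j c)ᵀ = Matrix.single j i c := by
  ext r s
  simp [Matrix.single, Matrix.transpose_apply, and_comm]

lemma my_diagonal_eq_sum {a : ℕ} (d : Fin a → ℝ) :
    Matrix.diagonal d = ∑ i, d i • Matrix.single i i (1:ℝ) := by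
  ext r c
  simp only [Matrix.sum_apply, Matrix.smul_apply, Matrix.single, Matrix.of_apply,
    smul_eq_mul, mul_ite, mul_one, mul_zero]
  rcases eq_or_ne r c with h | h
  · subst h
    rw [Matrix.diagonal_apply_eq]
    rw [Finset.sum_eq_single r]
    · simp
    · intro i _ hi; simp [hi]
    · simp
  · rw [Matrix.diagonal_apply_ne _ h]
    symm
    apply Finset.sum_eq_zero
    intro i _
    by_cases h1 : i = r <;> by_cases h2 : i = c <;> simp_all

lemma my_std_mul_std {a b : ℕ} (i : Fin a) (j : Fin b) :
    Matrix.single i j (1:ℝ) * Matrix.single j i (1:ℝ)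
      = Matrix.single i i (1:ℝ) := by
  ext r s
  rw [Matrix.mul_apply]
  rw [Finset.sum_eq_single j]
  · by_cases h1 : i = r <;> by_cases h2 : i = s <;>
      simp [Matrix.single, h1, h2, ite_and]
  · intro k _ hk
    simp [Matrix.single, Ne.symm hk]
  · simp

lemma term_eq {m n : ℕ} (X : Matrix (Fin m) (Fin n) ℝ) (p : Fin m → Fin n → ℝ)
    (i : Fin m) (j : Fin n) (hz : p i j = 0 → X i j = 0) :
    p i j • (((X i j / p i j) • Matrix.single i j (1:ℝ) - X) *
        ((X i j / p i j) • Matrix.single i j (1:ℝ) - X)ᵀ)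
    = (X i j ^ 2 / p i j) • Matrix.single i i (1:ℝ)
      - X i j • (Matrix.single i j (1:ℝ) * Xᵀ)
      - X i j • (X * (Matrix.single j i (1:ℝ)))
      + p i j • (X * Xᵀ) := by
  rcases eq_or_ne (p i j) 0 with h | h
  · have hX := hz h
    simp [h, hX]
  · have expand : ((X i j / p i j) • Matrix.single i j (1:ℝ) - X) *
        ((X i j / p i j) • Matrix.single i j (1:ℝ) - X)ᵀ
      = ((X i j / p i j) * (X i j / p i j)) • Matrix.single i i (1:ℝ)
        - (X i j / p i j) • (Matrix.single i j (1:ℝ) * Xᵀ)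
        - (X i j / p i j) • (X * (Matrix.single j i (1:ℝ)))
        + X * Xᵀ := by
      rw [Matrix.transpose_sub, Matrix.transpose_smul, my_transpose_std]
      rw [Matrix.sub_mul, Matrix.mul_sub, Matrix.mul_sub]
      rw [Matrix.smul_mul, Matrix.smul_mul, Matrix.mul_smul, Matrix.mul_smul, smul_smul]
      rw [my_std_mul_std]
      abel
    rw [expand]
    rw [smul_add, smul_sub, smul_sub, smul_smul, smul_smul, smul_smul]
    have hc : p i j * (X i j / p i j) = X i j := by field_simp
    have hc2 : p i j * ((X i j / p i j) * (X i j / p i j)) = X i j ^ 2 / p i j := by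
      field_simp
    rw [hc, hc2]


/-- Lemma 2: with M = (X_IJ / p_IJ) e_I e_Jᵀ − X for a random pair (I,J) ∼ p,
‖E[M Mᵀ]‖₂ ≤ (2n/β) ‖X‖_F². -/
theorem bound_expectation_MMT {m n : ℕ} (X : Matrix (Fin m) (Fin n) ℝ)
    (β : ℝ) (hβ0 : 0 < β) (hβ1 : β ≤ 1)
    (p : Fin m → Fin n → ℝ) (hp0 : ∀ i j, 0 ≤ p i j) (hpsum : ∑ i, ∑ j, p i j = 1)
    (hplb : ∀ i j, p i j ≥ (β / 2) *
      ((X i j) ^ 2 / (frobNorm X) ^ 2 + |X i j| / ∑ k, ∑ l, |X k l|)) :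
    specNorm (∑ i, ∑ j, p i j •
        (((X i j / p i j) • Matrix.single i j (1 : ℝ) - X) *
          ((X i j / p i j) • Matrix.single i j (1 : ℝ) - X)ᵀ))
      ≤ (2 * n / β) * (frobNorm X) ^ 2 := by
  set F2 : ℝ := (frobNorm X) ^ 2 with hF2def
  have hF2eq : F2 = ∑ i, ∑ j, (X i j) ^ 2 := by
    rw [hF2def, frobNorm, Real.sq_sqrt]
    exact Finset.sum_nonneg fun i _ => Finset.sum_nonneg fun j _ => sq_nonneg _
  have hF2nonneg : 0 ≤ F2 := sq_nonneg _
  -- p i j = 0 → X i j = 0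
  have hF2pos : ∀ i j, X i j ≠ 0 → 0 < F2 := by
    intro i j hX
    rw [hF2eq]
    have h1 : (X i j)^2 ≤ ∑ l, (X i l)^2 :=
      Finset.single_le_sum (fun l _ => sq_nonneg (X i l)) (Finset.mem_univ j)
    have h2 : (∑ l, (X i l)^2) ≤ ∑ k, ∑ l, (X k l)^2 :=
      Finset.single_le_sum (f := fun k => ∑ l, (X k l)^2)
        (fun k _ => Finset.sum_nonneg fun l _ => sq_nonneg _) (Finset.mem_univ i)
    have h3 : 0 < X i j ^ 2 := by positivity
    linarith
  have hppos : ∀ i j, X i j ≠ 0 → 0 < p i j := by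
    intro i j hX
    have hF := hF2pos i j hX
    have h1 : 0 < (X i j)^2 / F2 := by positivity
    have h2 : 0 ≤ |X i j| / ∑ k, ∑ l, |X k l| := by positivity
    have := hplb i j
    nlinarith
  have hz : ∀ i j, p i j = 0 → X i j = 0 := by
    intro i j hp
    by_contra hX
    exact absurd hp (ne_of_gt (hppos i j hX))
  -- entry bound
  have hentry : ∀ i j, X i j ^ 2 / p i j ≤ 2 / β * F2 := by
    intro i j
    rcases eq_or_ne (X i j) 0 with h | h
    · rw [h, zero_pow two_ne_zero, zero_div]
      positivity
    · have hF := hF2pos i j h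
      have hp := hppos i j h
      rw [div_le_iff₀ hp]
      have hlb := hplb i j
      have h2 : 0 ≤ |X i j| / ∑ k, ∑ l, |X k l| := by positivity
      have hlb2 : p i j ≥ β / 2 * ((X i j)^2 / F2) := by nlinarith
      have : 2 / β * F2 * (β / 2 * ((X i j)^2 / F2)) = (X i j)^2 := by
        field_simp
      nlinarith [mul_le_mul_of_nonneg_left hlb2 (by positivity : (0:ℝ) ≤ 2 / β * F2)]
  set d : Fin m → ℝ := fun i => ∑ j, X i j ^ 2 / p i j with hd
  set C : ℝ := (2 * n / β) * F2 with hC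
  have hCnonneg : 0 ≤ C := by positivity
  have hdC : ∀ i, d i ≤ C := by
    intro i
    calc d i ≤ ∑ _j : Fin n, 2 / β * F2 :=
          Finset.sum_le_sum fun j _ => hentry i j
      _ = n * (2 / β * F2) := by rw [Finset.sum_const]; simp [nsmul_eq_mul]
      _ = C := by rw [hC]; ring
  -- E = diagonal d - X Xᵀ
  set E := ∑ i, ∑ j, p i j •
        (((X i j / p i j) • Matrix.single i j (1 : ℝ) - X) *
          ((X i j / p i j) • Matrix.single i j (1 : ℝ) - X)ᵀ) with hE
  have hpsd : ∀ v : Fin m → ℝ, 0 ≤ dotProduct v (E *ᵥ v) := by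
    intro v
    rw [hE, my_sum_mulVec, my_dotProduct_sum]
    apply Finset.sum_nonneg
    intro i _
    rw [my_sum_mulVec, my_dotProduct_sum]
    apply Finset.sum_nonneg
    intro j _
    rw [Matrix.smul_mulVec, dotProduct_smul, smul_eq_mul]
    exact mul_nonneg (hp0 i j) (my_quad_mul_transpose_nonneg _ v)
  have hkey : E = Matrix.diagonal d - X * Xᵀ := by
    rw [hE]
    have step : ∀ i j, p i j •
        (((X i j / p i j) • Matrix.single i j (1 : ℝ) - X) *
          ((X i j / p i j) • Matrix.single i j (1 : ℝ) - X)ᵀ)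
      = (X i j ^ 2 / p i j) • Matrix.single i i (1:ℝ)
        - X i j • (Matrix.single i j (1:ℝ) * Xᵀ)
        - X i j • (X * (Matrix.single j i (1:ℝ)))
        + p i j • (X * Xᵀ) := fun i j => term_eq X p i j (hz i j)
    calc (∑ i, ∑ j, p i j •
        (((X i j / p i j) • Matrix.single i j (1 : ℝ) - X) *
          ((X i j / p i j) • Matrix.single i j (1 : ℝ) - X)ᵀ))
        = (∑ i, ∑ j, (X i j ^ 2 / p i j) • Matrix.single i i (1:ℝ))
          - (∑ i, ∑ j, X i j • (Matrix.single i j (1:ℝ) * Xᵀ))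
          - (∑ i, ∑ j, X i j • (X * (Matrix.single j i (1:ℝ))))
          + (∑ i, ∑ j, p i j • (X * Xᵀ)) := by
          simp only [step, Finset.sum_add_distrib, Finset.sum_sub_distrib]
      _ = Matrix.diagonal d - X * Xᵀ - X * Xᵀ + X * Xᵀ := by
          have e1 : (∑ i, ∑ j, (X i j ^ 2 / p i j) • Matrix.single i i (1:ℝ))
              = Matrix.diagonal d := by
            rw [my_diagonal_eq_sum]
            exact Finset.sum_congr rfl fun i _ => (Finset.sum_smul).symm
          have h2' : ∀ (i : Fin m) (j : Fin n),
              X i j • (Matrix.single i j (1:ℝ) * Xᵀ)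
                = Matrix.single i j (X i j) * Xᵀ := fun i j => by
            rw [← Matrix.smul_mul, Matrix.smul_single, smul_eq_mul, mul_one]
          have e2 : (∑ i : Fin m, ∑ j : Fin n, X i j • (Matrix.single i j (1:ℝ) * Xᵀ))
              = X * Xᵀ := by
            calc (∑ i : Fin m, ∑ j : Fin n, X i j • (Matrix.single i j (1:ℝ) * Xᵀ))
                = (∑ i : Fin m, ∑ j : Fin n, Matrix.single i j (X i j)) * Xᵀ := by
                  simp_rw [h2', Matrix.sum_mul]
              _ = X * Xᵀ := by rw [← Matrix.matrix_eq_sum_single]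
          have h3' : ∀ (i : Fin m) (j : Fin n),
              X i j • (X * Matrix.single j i (1:ℝ))
                = X * Matrix.single j i (X i j) := fun i j => by
            rw [← Matrix.mul_smul, Matrix.smul_single, smul_eq_mul, mul_one]
          have e3 : (∑ i : Fin m, ∑ j : Fin n, X i j • (X * Matrix.single j i (1:ℝ)))
              = X * Xᵀ := by
            calc (∑ i : Fin m, ∑ j : Fin n, X i j • (X * Matrix.single j i (1:ℝ)))
                = X * (∑ i : Fin m, ∑ j : Fin n, Matrix.single j i (X i j)) := by
                  simp_rw [h3', Matrix.mul_sum]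
              _ = X * Xᵀ := by
                  congr 1
                  rw [Finset.sum_comm]
                  exact (Matrix.matrix_eq_sum_single Xᵀ).symm
          have e4 : (∑ i : Fin m, ∑ j : Fin n, p i j • (X * Xᵀ)) = X * Xᵀ := by
            simp_rw [← Finset.sum_smul]
            rw [hpsum, one_smul]
          rw [e1, e2, e3, e4]
    abel
  rw [hkey] at hpsd ⊢
  have hsymE : (Matrix.diagonal d - X * Xᵀ)ᵀ = Matrix.diagonal d - X * Xᵀ := by
    rw [Matrix.transpose_sub, Matrix.diagonal_transpose, Matrix.transpose_mul,
      Matrix.transpose_transpose]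
  apply specNorm_le_of_quadform _ hsymE hpsd C hCnonneg
  · intro v
    rw [Matrix.sub_mulVec, dotProduct_sub]
    have h1 : 0 ≤ dotProduct v ((X * Xᵀ) *ᵥ v) := my_quad_mul_transpose_nonneg X v
    have h2 : dotProduct v ((Matrix.diagonal d) *ᵥ v) ≤ C * dotProduct v v := by
      rw [dotProduct]
      simp_rw [Matrix.mulVec_diagonal]
      rw [dotProduct, Finset.mul_sum]
      apply Finset.sum_le_sum
      intro i _
      have := hdC i
      nlinarith [mul_self_nonneg (v i), hdC i]
    linarith
end
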